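/- Let 0 ≤ k₁ ≤ k₂ ≤ ⋯ ≤ k_N be strikes with prices q₁, …, q_N ∈ ℝ such that q_N > 0, let k ≥ 0 and M > 0. Let F be the set of Borel probability measures μ on [0,∞) with ∫ max(0, x − k_j) dμ(x) = q_j for all j ∈ [N] and ∫ x² dμ(x) ≤ M. If the infimum of ∫ max(0, x − k) dμ(x) over F is attained, then it is attained by a finitely atomic measure μ* whose support is contained in the interval [0, B], where B = (M + √(M·(M − 4·q_N·k_N)))/(2·q_N). -/

import Mathlib

/-! Take an optimal `μ` and partition `ℝ` into the cells on which the set of strikes `k_j ≤ x`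
is constant. Replace `μ` on each cell by a point mass, of the cell's weight, at the cell's mean.
Every call payoff `(x - k_j)⁺` is affine on every cell, so the prices are unchanged, while by
Jensen the second moment and the objective `(x - k)⁺` do not increase: the new finitely atomic
measure is again feasible and optimal. Its atoms are cell means, hence nonnegative, and every cell
other than the top one `[k_N, ∞)` lies below `k_N`. On the top cell, of weight `p` and mean `m`,
we have `q_N = p (m - k_N)` and `p m² ≤ M`, so `q_N m² - M m + M k_N ≤ 0`, i.e. `m ≤ B`. -/

open MeasureTheory Set Function

section SetAverage

variable {μ : Measure ℝ} [IsFiniteMeasure μ] {A : Set ℝ}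

lemma measureReal_mul_le_setIntegral_of_convexOn {f : ℝ → ℝ} (hf : ConvexOn ℝ univ f)
    (hfc : Continuous f) (hid : IntegrableOn (fun x => x) A μ) (hfi : IntegrableOn f A μ) :
    μ.real A * f (⨍ x in A, x ∂μ) ≤ ∫ x in A, f x ∂μ := by
  rcases eq_or_ne (μ A) 0 with h0 | h0
  · simp [Measure.real, h0, Measure.restrict_eq_zero.2 h0]
  rw [← measure_smul_setAverage f (measure_ne_top μ A), smul_eq_mul]
  exact mul_le_mul_of_nonneg_left (hf.map_set_average_le hfc.continuousOn isClosed_univ h0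
    (measure_ne_top μ A) (by simp) hid hfi) measureReal_nonneg

lemma setIntegral_eq_measureReal_mul_of_eqOn_affine {s : Set ℝ} {f : ℝ → ℝ} {a b : ℝ}
    (hs : IsClosed s) (hsc : Convex ℝ s) (hA : MeasurableSet A) (hAs : A ⊆ s)
    (hf : EqOn f (fun x => a * x + b) s) (hid : IntegrableOn (fun x => x) A μ) :
    ∫ x in A, f x ∂μ = μ.real A * f (⨍ x in A, x ∂μ) := by
  rcases eq_or_ne (μ A) 0 with h0 | h0
  · simp [Measure.real, h0, Measure.restrict_eq_zero.2 h0]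
  have hmem : ⨍ x in A, x ∂μ ∈ s := hsc.set_average_mem hs h0 (measure_ne_top μ A)
    ((ae_restrict_mem hA).mono fun _ hx => hAs hx) hid
  rw [setIntegral_congr_fun hA (hf.mono hAs), hf hmem,
    integral_add (hid.const_mul a) (integrableOn_const (measure_ne_top μ A)),
    integral_const_mul, setIntegral_const, ← measure_smul_setAverage _ (measure_ne_top μ A)]
  simp only [smul_eq_mul]
  ring

lemma setIntegral_max_zero_sub_eq {t : ℝ} (hA : MeasurableSet A)
    (hside : A ⊆ Ici t ∨ A ⊆ Iic t) (hid : IntegrableOn (fun x => x) A μ) :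
    ∫ x in A, max 0 (x - t) ∂μ = μ.real A * max 0 (⨍ x in A, x ∂μ - t) := by
  rcases hside with h | h
  · refine setIntegral_eq_measureReal_mul_of_eqOn_affine (a := 1) (b := -t) isClosed_Ici
      (convex_Ici t) hA h (fun x (hx : t ≤ x) => ?_) hid
    simp [hx, sub_eq_add_neg]
  · refine setIntegral_eq_measureReal_mul_of_eqOn_affine (a := 0) (b := 0) isClosed_Iic
      (convex_Iic t) hA h (fun x (hx : x ≤ t) => ?_) hid
    simp [hx]

end SetAverage

lemma integrable_of_integrable_sq {X : Type*} [MeasurableSpace X] {μ : Measure X}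
    [IsFiniteMeasure μ] {f : X → ℝ} (hf : AEStronglyMeasurable f μ)
    (hsq : Integrable (fun x => f x ^ 2) μ) : Integrable f μ :=
  ((memLp_two_iff_integrable_sq hf).2 hsq).integrable one_le_two

lemma integrable_max_zero_sub {μ : Measure ℝ} [IsFiniteMeasure μ]
    (hid : Integrable (fun x => x) μ) (t : ℝ) : Integrable (fun x => max 0 (x - t)) μ :=
  (integrable_const 0).sup (hid.sub (integrable_const t))

lemma mem_Ioc_of_eq_mul_max_sub_of_mul_sq_le {p m kN qN M : ℝ} (hq : 0 < qN)
    (hprice : qN = p * max 0 (m - kN)) (hmoment : p * m ^ 2 ≤ M) :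
    m ∈ Ioc kN ((M + √(M * (M - 4 * qN * kN))) / (2 * qN)) := by
  have hm : kN < m := by
    by_contra! h
    rw [max_eq_left (sub_nonpos.2 h), mul_zero] at hprice
    exact hq.ne' hprice
  rw [max_eq_right (sub_nonneg.2 hm.le)] at hprice
  have hquad : (2 * qN * m - M) ^ 2 ≤ M * (M - 4 * qN * kN) := by
    have : qN * m ^ 2 ≤ M * (m - kN) := by
      rw [hprice, mul_right_comm]
      exact mul_le_mul_of_nonneg_right hmoment (sub_nonneg.2 hm.le)
    nlinarith
  refine ⟨hm, (le_div_iff₀ (by positivity)).2 ?_⟩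
  linarith [(le_abs_self _).trans ((Real.sqrt_sq_eq_abs (2 * qN * m - M)).symm.le.trans
    (Real.sqrt_le_sqrt hquad))]

lemma setAverage_Ici_mem_Ioc {μ : Measure ℝ} [IsFiniteMeasure μ] {kN qN M : ℝ}
    (hid : Integrable (fun x => x) μ) (hsq : Integrable (fun x => x ^ 2) μ)
    (hM : ∫ x, x ^ 2 ∂μ ≤ M) (hprice : ∫ x, max 0 (x - kN) ∂μ = qN) (hq : 0 < qN) :
    ⨍ x in Ici kN, x ∂μ ∈ Ioc kN ((M + √(M * (M - 4 * qN * kN))) / (2 * qN)) := by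
  refine mem_Ioc_of_eq_mul_max_sub_of_mul_sq_le (p := μ.real (Ici kN)) hq ?_ ?_
  · rw [← hprice, ← setIntegral_eq_integral_of_forall_compl_eq_zero (s := Ici kN) fun x hx =>
      max_eq_left (sub_nonpos.2 (not_le.1 hx).le),
      setIntegral_max_zero_sub_eq measurableSet_Ici (Or.inl subset_rfl) hid.integrableOn]
  · calc μ.real (Ici kN) * (⨍ x in Ici kN, x ∂μ) ^ 2 ≤ ∫ x in Ici kN, x ^ 2 ∂μ :=
          measureReal_mul_le_setIntegral_of_convexOn even_two.convexOn_pow (continuous_pow 2)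
            hid.integrableOn hsq.integrableOn
      _ ≤ ∫ x, x ^ 2 ∂μ := setIntegral_le_integral hsq (.of_forall fun x => sq_nonneg x)
      _ ≤ M := hM

structure IsMeasurablePartition {X ι : Type*} [MeasurableSpace X] (A : ι → Set X) : Prop where
  measurableSet : ∀ i, MeasurableSet (A i)
  pairwise_disjoint : Pairwise (Disjoint on A)
  iUnion_eq_univ : ⋃ i, A i = univ

lemma IsMeasurablePartition.integral_eq_sum_setIntegral {X ι : Type*} [MeasurableSpace X]
    [Fintype ι] {μ : Measure X} {A : ι → Set X} (hA : IsMeasurablePartition A) {f : X → ℝ}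
    (hf : Integrable f μ) : ∫ x, f x ∂μ = ∑ i, ∫ x in A i, f x ∂μ := by
  rw [← integral_iUnion_fintype hA.measurableSet hA.pairwise_disjoint fun i => hf.integrableOn,
    hA.iUnion_eq_univ, Measure.restrict_univ]

noncomputable def collapse {ι : Type*} [Fintype ι] (μ : Measure ℝ) (A : ι → Set ℝ) :
    Measure ℝ :=
  ∑ i, μ (A i) • Measure.dirac (⨍ x in A i, x ∂μ)

section Collapse

variable {ι : Type*} [Fintype ι] {μ : Measure ℝ} {A : ι → Set ℝ}

lemma integrable_collapse [IsFiniteMeasure μ] (f : ℝ → ℝ) : Integrable f (collapse μ A) :=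
  integrable_finsetSum_measure.2 fun i _ =>
    (integrable_dirac (by simp)).smul_measure (measure_ne_top μ (A i))

lemma integral_collapse [IsFiniteMeasure μ] (f : ℝ → ℝ) :
    ∫ x, f x ∂collapse μ A = ∑ i, μ.real (A i) * f (⨍ x in A i, x ∂μ) := by
  rw [collapse, integral_finsetSum_measure fun i _ =>
    (integrable_dirac (by simp)).smul_measure (measure_ne_top μ (A i))]
  simp [integral_smul_measure, Measure.real]

lemma collapse_compl_eq_zero [IsFiniteMeasure μ] {s : Set ℝ} (hs : IsClosed s)
    (hsc : Convex ℝ s) (hμs : μ sᶜ = 0) (hid : Integrable (fun x => x) μ) :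
    collapse μ A sᶜ = 0 := by
  simp only [collapse, Measure.coe_finsetSum, Finset.sum_apply, Measure.smul_apply, smul_eq_mul]
  refine Finset.sum_eq_zero fun i _ => ?_
  rcases eq_or_ne (μ (A i)) 0 with h0 | h0
  · rw [h0, zero_mul]
  have hmem := hsc.set_average_mem hs h0 (measure_ne_top μ (A i))
    (ae_restrict_of_ae (ae_iff.2 hμs)) hid.integrableOn
  rw [Measure.dirac_apply' _ hs.isOpen_compl.measurableSet, indicator_of_notMem (by simpa),
    mul_zero]

lemma IsMeasurablePartition.isProbabilityMeasure_collapse [IsProbabilityMeasure μ]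
    (hA : IsMeasurablePartition A) : IsProbabilityMeasure (collapse μ A) := by
  constructor
  simp only [collapse, Measure.coe_finsetSum, Finset.sum_apply, Measure.smul_apply,
    measure_univ, smul_eq_mul, mul_one]
  rw [← tsum_fintype (L := .unconditional _), ← measure_iUnion hA.pairwise_disjoint
    hA.measurableSet, hA.iUnion_eq_univ, measure_univ]

lemma IsMeasurablePartition.integral_collapse_le_of_convexOn [IsFiniteMeasure μ]
    (hA : IsMeasurablePartition A) {f : ℝ → ℝ} (hf : ConvexOn ℝ univ f) (hfc : Continuous f)
    (hid : Integrable (fun x => x) μ) (hfi : Integrable f μ) :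
    ∫ x, f x ∂collapse μ A ≤ ∫ x, f x ∂μ := by
  rw [integral_collapse, hA.integral_eq_sum_setIntegral hfi]
  exact Finset.sum_le_sum fun i _ =>
    measureReal_mul_le_setIntegral_of_convexOn hf hfc hid.integrableOn hfi.integrableOn

lemma IsMeasurablePartition.integral_max_zero_sub_collapse [IsFiniteMeasure μ]
    (hA : IsMeasurablePartition A) {t : ℝ} (hside : ∀ i, A i ⊆ Ici t ∨ A i ⊆ Iic t)
    (hid : Integrable (fun x => x) μ) :
    ∫ x, max 0 (x - t) ∂collapse μ A = ∫ x, max 0 (x - t) ∂μ := by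
  rw [integral_collapse, hA.integral_eq_sum_setIntegral (integrable_max_zero_sub hid t)]
  exact Finset.sum_congr rfl fun i _ =>
    (setIntegral_max_zero_sub_eq (hA.measurableSet i) (hside i) hid.integrableOn).symm

end Collapse

def strikeCell {ι : Type*} (t : ι → ℝ) (S : Finset ι) : Set ℝ :=
  {x | ∀ j, t j ≤ x ↔ j ∈ S}

section StrikeCell

variable {ι : Type*} (t : ι → ℝ)

lemma strikeCell_subset_Ici_or_Iic (S : Finset ι) (j : ι) :
    strikeCell t S ⊆ Ici (t j) ∨ strikeCell t S ⊆ Iic (t j) := by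
  by_cases hj : j ∈ S
  · exact Or.inl fun x hx => (hx j).2 hj
  · exact Or.inr fun x hx => le_of_not_ge fun h => hj ((hx j).1 h)

variable [Fintype ι]

lemma isMeasurablePartition_strikeCell : IsMeasurablePartition (strikeCell t) where
  measurableSet S := by
    rw [strikeCell, ofPred_forall]
    refine MeasurableSet.iInter fun j => ?_
    by_cases hj : j ∈ S
    · simp only [hj, iff_true]
      exact measurableSet_Ici
    · simp only [hj, iff_false, not_le]
      exact measurableSet_Iio
  pairwise_disjoint _ _ hST := disjoint_left.2 fun _ hxS hxT =>
    hST (Finset.ext fun j => (hxS j).symm.trans (hxT j))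
  iUnion_eq_univ := by
    classical
    exact eq_univ_of_forall fun x =>
      mem_iUnion.2 ⟨Finset.univ.filter (t · ≤ x), fun j => by simp⟩

lemma strikeCell_univ {last : ι} (hmax : ∀ j, t j ≤ t last) :
    strikeCell t Finset.univ = Ici (t last) :=
  ext fun _ => ⟨fun hx => (hx last).2 (Finset.mem_univ _),
    fun hx j => iff_of_true ((hmax j).trans hx) (Finset.mem_univ j)⟩

lemma strikeCell_subset_Iio_of_ne_univ {last : ι} (hmax : ∀ j, t j ≤ t last) {S : Finset ι}
    (hS : S ≠ Finset.univ) : strikeCell t S ⊆ Iio (t last) := by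
  obtain ⟨j, hj⟩ : ∃ j, j ∉ S := by
    by_contra! h
    exact hS (Finset.eq_univ_of_forall h)
  exact fun x hx => (lt_of_not_ge fun h => hj ((hx j).1 h)).trans_le (hmax j)

end StrikeCell

def feasibleSet {ι : Type*} (ks q : ι → ℝ) (M : ℝ) : Set (Measure ℝ) :=
  {μ | IsProbabilityMeasure μ ∧ μ (Iio 0) = 0 ∧
    (∀ j, Integrable (fun x => max 0 (x - ks j)) μ ∧ ∫ x, max 0 (x - ks j) ∂μ = q j) ∧
    Integrable (fun x => x ^ 2) μ ∧ ∫ x, x ^ 2 ∂μ ≤ M}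

section FeasibleSet

variable {ι : Type*} [Fintype ι] {ks q : ι → ℝ} {M : ℝ} {μ : Measure ℝ}

lemma collapse_strikeCell_mem_feasibleSet (hμ : μ ∈ feasibleSet ks q M) :
    collapse μ (strikeCell ks) ∈ feasibleSet ks q M := by
  obtain ⟨hprob, hneg, hprice, hsq, hM⟩ := hμ
  have hid := integrable_of_integrable_sq aestronglyMeasurable_id hsq
  have hA := isMeasurablePartition_strikeCell ks
  refine ⟨hA.isProbabilityMeasure_collapse, ?_, fun j => ⟨integrable_collapse _, ?_⟩,
    integrable_collapse _, ?_⟩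
  · rw [← compl_Ici] at hneg ⊢
    exact collapse_compl_eq_zero isClosed_Ici (convex_Ici 0) hneg hid
  · rw [hA.integral_max_zero_sub_collapse (fun S => strikeCell_subset_Ici_or_Iic ks S j) hid,
      (hprice j).2]
  · exact (hA.integral_collapse_le_of_convexOn even_two.convexOn_pow (continuous_pow 2)
      hid hsq).trans hM

lemma integral_max_zero_sub_collapse_strikeCell_le (hμ : μ ∈ feasibleSet ks q M) (k : ℝ) :
    ∫ x, max 0 (x - k) ∂collapse μ (strikeCell ks) ≤ ∫ x, max 0 (x - k) ∂μ := by
  have : IsProbabilityMeasure μ := hμ.1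
  have hid := integrable_of_integrable_sq aestronglyMeasurable_id hμ.2.2.2.1
  exact (isMeasurablePartition_strikeCell ks).integral_collapse_le_of_convexOn
    ((convexOn_const 0 convex_univ).sup
      ((convexOn_id convex_univ).sub (concaveOn_const k convex_univ)))
    (by fun_prop) hid (integrable_max_zero_sub hid k)

lemma setAverage_strikeCell_mem_Icc {last : ι} (hmax : ∀ j, ks j ≤ ks last) (hq : 0 < q last)
    (hμ : μ ∈ feasibleSet ks q M) {S : Finset ι} (hS : μ (strikeCell ks S) ≠ 0) :
    ⨍ x in strikeCell ks S, x ∂μ ∈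
      Icc 0 ((M + √(M * (M - 4 * q last * ks last))) / (2 * q last)) := by
  obtain ⟨hprob, hneg, hprice, hsq, hM⟩ := hμ
  have hid := integrable_of_integrable_sq aestronglyMeasurable_id hsq
  have htop := setAverage_Ici_mem_Ioc hid hsq hM (hprice last).2 hq
  refine ⟨(convex_Ici 0).set_average_mem isClosed_Ici hS (measure_ne_top _ _)
    (ae_restrict_of_ae ((measure_eq_zero_iff_ae_notMem.1 hneg).mono fun _ hx => not_lt.1 hx))
    hid.integrableOn, ?_⟩
  rcases eq_or_ne S Finset.univ with rfl | hne
  · rw [strikeCell_univ ks hmax]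
    exact htop.2
  · have hbelow : ⨍ x in strikeCell ks S, x ∂μ ≤ ks last :=
      (convex_Iic _).set_average_mem isClosed_Iic hS (measure_ne_top _ _)
        ((ae_restrict_mem ((isMeasurablePartition_strikeCell ks).measurableSet S)).mono
          fun _ hx => (strikeCell_subset_Iio_of_ne_univ ks hmax hne hx).le) hid.integrableOn
    exact hbelow.trans (htop.1.le.trans htop.2)

end FeasibleSet

lemma exists_fin_sum_dirac_eq {α ι : Type*} [MeasurableSpace α] [Fintype ι]
    (c : ι → ENNReal) (hc : ∀ i, c i ≠ ⊤) (x : ι → α) :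
    ∃ (J : ℕ) (ω : Fin J → ℝ) (pts : Fin J → α), (∀ j, 0 < ω j) ∧
      (∀ j, ∃ i, c i ≠ 0 ∧ pts j = x i) ∧
      ∑ i, c i • Measure.dirac (x i) =
        ∑ j, ENNReal.ofReal (ω j) • Measure.dirac (pts j) := by
  classical
  set s := Finset.univ.filter fun i => c i ≠ 0
  let e := s.equivFin.symm
  refine ⟨s.card, fun j => (c (e j)).toReal, fun j => x (e j),
    fun j => ENNReal.toReal_pos (Finset.mem_filter.1 (e j).2).2 (hc _),
    fun j => ⟨e j, (Finset.mem_filter.1 (e j).2).2, rfl⟩, ?_⟩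
  rw [← Finset.sum_filter_of_ne (p := fun i => c i ≠ 0) fun i _ h hc0 => h (by simp [hc0]),
    ← Finset.sum_coe_sort, ← e.sum_comp]
  simp [ENNReal.ofReal_toReal (hc _)]

theorem univariate_support_bound_general
    (N : ℕ) (hN : 0 < N)
    (ks : Fin N → ℝ) (q : Fin N → ℝ)
    (hmono : Monotone ks)
    (kN : ℝ) (hkN : kN = ks ⟨N - 1, Nat.sub_lt hN one_pos⟩)
    (qN : ℝ) (hqN : qN = q ⟨N - 1, Nat.sub_lt hN one_pos⟩) (hqNpos : 0 < qN)
    (k : ℝ) (M : ℝ)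
    (B : ℝ) (hB : B = (M + Real.sqrt (M * (M - 4 * qN * kN))) / (2 * qN))
    (F : Set (Measure ℝ))
    (hF : F = {μ | IsProbabilityMeasure μ ∧ μ (Set.Iio 0) = 0 ∧
        (∀ j, Integrable (fun x => max 0 (x - ks j)) μ ∧
          ∫ x, max 0 (x - ks j) ∂μ = q j) ∧
        Integrable (fun x => x ^ 2) μ ∧ ∫ x, x ^ 2 ∂μ ≤ M})
    (hatt : ∃ μ ∈ F, ∫ x, max 0 (x - k) ∂μ =
        sInf ((fun ν => ∫ x, max 0 (x - k) ∂ν) '' F)) :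
    ∃ μ ∈ F, ∫ x, max 0 (x - k) ∂μ = sInf ((fun ν => ∫ x, max 0 (x - k) ∂ν) '' F) ∧
      ∃ (J : ℕ) (ω : Fin J → ℝ) (pts : Fin J → ℝ),
        (∀ j, 0 < ω j) ∧ (∀ j, pts j ∈ Set.Icc 0 B) ∧
        μ = ∑ j, ENNReal.ofReal (ω j) • Measure.dirac (pts j) := by
  replace hF : F = feasibleSet ks q M := hF
  subst hkN hqN hB hF
  obtain ⟨μ, hμ, hμopt⟩ := hatt
  have : IsProbabilityMeasure μ := hμ.1
  have hmax : ∀ j, ks j ≤ ks ⟨N - 1, Nat.sub_lt hN one_pos⟩ :=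
    fun j => hmono (Nat.le_sub_one_of_lt j.2)
  have hν := collapse_strikeCell_mem_feasibleSet hμ
  obtain ⟨J, ω, pts, hω, hpts, hrepr⟩ := exists_fin_sum_dirac_eq
    (fun S => μ (strikeCell ks S)) (fun S => measure_ne_top μ _)
    (fun S => ⨍ x in strikeCell ks S, x ∂μ)
  refine ⟨_, hν, le_antisymm ?_ ?_, J, ω, pts, hω, fun j => ?_, hrepr⟩
  · exact (integral_max_zero_sub_collapse_strikeCell_le hμ k).trans_eq hμopt
  · refine csInf_le ⟨0, ?_⟩ ⟨_, hν, rfl⟩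
    rintro _ ⟨ρ, _, rfl⟩
    exact integral_nonneg fun x => le_max_left _ _
  · obtain ⟨S, hS, hj⟩ := hpts j
    exact hj ▸ setAverage_strikeCell_mem_Icc hmax hqNpos hμ hS

/-- Conclusion of Section 4.2: in the univariate problem, if the infimum is attained then
it is attained by a finitely atomic measure whose support is contained in `[0, B]` with
`B = (M + √(M(M - 4·q_N·k_N)))/(2·q_N)`. -/
theorem univariate_support_bound
    (N : ℕ) (hN : 0 < N)
    (ks : Fin N → ℝ) (q : Fin N → ℝ)
    (hmono : Monotone ks)
    (hks0 : 0 ≤ ks ⟨0, hN⟩)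
    (kN : ℝ) (hkN : kN = ks ⟨N - 1, Nat.sub_lt hN one_pos⟩)
    (qN : ℝ) (hqN : qN = q ⟨N - 1, Nat.sub_lt hN one_pos⟩) (hqNpos : 0 < qN)
    (k : ℝ) (hk : 0 ≤ k) (M : ℝ) (hM : 0 < M)
    (B : ℝ) (hB : B = (M + Real.sqrt (M * (M - 4 * qN * kN))) / (2 * qN))
    (F : Set (Measure ℝ))
    (hF : F = {μ | IsProbabilityMeasure μ ∧ μ (Set.Iio 0) = 0 ∧
        (∀ j, Integrable (fun x => max 0 (x - ks j)) μ ∧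
          ∫ x, max 0 (x - ks j) ∂μ = q j) ∧
        Integrable (fun x => x ^ 2) μ ∧ ∫ x, x ^ 2 ∂μ ≤ M})
    (hatt : ∃ μ ∈ F, ∫ x, max 0 (x - k) ∂μ =
        sInf ((fun ν => ∫ x, max 0 (x - k) ∂ν) '' F)) :
    ∃ μ ∈ F, ∫ x, max 0 (x - k) ∂μ = sInf ((fun ν => ∫ x, max 0 (x - k) ∂ν) '' F) ∧
      ∃ (J : ℕ) (ω : Fin J → ℝ) (pts : Fin J → ℝ),
        (∀ j, 0 < ω j) ∧ (∀ j, pts j ∈ Set.Icc 0 B) ∧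
        μ = ∑ j, ENNReal.ofReal (ω j) • Measure.dirac (pts j) :=
  univariate_support_bound_general N hN ks q hmono kN hkN qN hqN hqNpos k M B hB F hF hatt
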